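/- arXiv:1306.2410 — 2 statements merged into one kernel-verified Lean document; each statement's English description precedes it below -/
import Mathlib

section
/- Let X = (X₁,…,X_m) be a centered N-dimensional Gaussian random vector with block covariance matrix T = (T_{ij}) and let P = diag(p₁T₁₁,…,p_mT_mm) for real exponents p₁,…,p_m. For every α = (α₁,…,α_m) ∈ ℝ^N with αᵢ ∈ ℝ^{nᵢ}, taking fᵢ(xᵢ) = exp(⟨αᵢ, xᵢ⟩) one has E[∏_{i=1}^m fᵢ(Xᵢ)] = exp(½⟨Tα, α⟩) and ∏_{i=1}^m (E[fᵢ(Xᵢ)^{pᵢ}])^{1/pᵢ} = exp(½⟨Pα, α⟩). Consequently: if E[∏_{i=1}^m fᵢ(Xᵢ)] ≤ ∏_{i=1}^m (E[fᵢ(Xᵢ)^{pᵢ}])^{1/pᵢ} holds for all nonnegative measurable fᵢ, then T ≤ P; if the reverse inequality holds for all nonnegative measurable fᵢ, then T ≥ P; and if α ∈ Ker(T − P), then equality holds in both inequalities for the exponential functions fᵢ(xᵢ) = exp(⟨αᵢ, xᵢ⟩). -/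
open MeasureTheory ProbabilityTheory Matrix
open scoped ENNReal

/-- The standard Gaussian measure on `ι → ℝ`. -/
noncomputable def stdGaussian (ι : Type*) [Fintype ι] : Measure (ι → ℝ) :=
  Measure.pi fun _ => gaussianReal 0 1

/-- The `p`-mean `(∫ f^p)^(1/p)` of a nonnegative function, read as
`exp (∫ log f)` when `p = 0`. -/
noncomputable def pMeanE {α : Type*} [MeasurableSpace α] (μ : Measure α)
    (f : α → ℝ≥0∞) (p : ℝ) : ℝ≥0∞ :=
  if p = 0 then ENNReal.ofReal (Real.exp (∫ x, Real.log (f x).toReal ∂μ))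
  else (∫⁻ x, f x ^ p ∂μ) ^ (1 / p)

/-!
Write `X = S Z` with `Z` standard Gaussian. Then `⟨β, X⟩ = ⟨β S, Z⟩`, and the product structure of
the law of `Z` together with the one-dimensional moment generating function give
`E exp ⟨β, X⟩ = exp (½ ⟨T β, β⟩)`, while the symmetry `Z ↦ -Z` gives `E ⟨β, X⟩ = 0` (the case
`p = 0`). Applied to `β = pᵢ αᵢ`, the `pᵢ`-mean of `exp ⟨αᵢ, Xᵢ⟩` is `exp (½ pᵢ ⟨Tᵢᵢ αᵢ, αᵢ⟩)`,
and these multiply to `exp (½ ⟨P α, α⟩)`. Testing either inequality on these exponentials and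
comparing exponents yields the quadratic-form inequality between `T` and `P`.
-/

open Real

section StdGaussian

variable {ι : Type*} [Fintype ι]

lemma lintegral_ofReal_exp_dotProduct_stdGaussian (β : ι → ℝ) :
    ∫⁻ x, ENNReal.ofReal (exp (β ⬝ᵥ x)) ∂stdGaussian ι = ENNReal.ofReal (exp (β ⬝ᵥ β / 2)) := by
  have hprod : ∀ x : ι → ℝ, exp (β ⬝ᵥ x) = ∏ i, exp (β i * x i) := fun x => by
    rw [dotProduct, exp_sum]
  simp_rw [hprod]
  rw [_root_.stdGaussian, ← ofReal_integral_eq_lintegral_ofReal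
      (Integrable.fintype_prod fun i => integrable_exp_mul_gaussianReal (β i))
      (ae_of_all _ fun x => by positivity),
    integral_fintype_prod_eq_prod fun i y => exp (β i * y)]
  have hmgf : ∀ i, ∫ y, exp (β i * y) ∂gaussianReal 0 1 = exp (β i * β i / 2) := fun i => by
    simpa [mgf, sq] using congrFun (mgf_id_gaussianReal (μ := 0) (v := 1)) (β i)
  simp_rw [hmgf, ← exp_sum, dotProduct, Finset.sum_div]

lemma map_neg_stdGaussian : (stdGaussian ι).map Neg.neg = stdGaussian ι := by
  have h := Measure.pi_map_pi (μ := fun _ : ι => gaussianReal 0 1) (f := fun _ y => -y)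
    fun _ => measurable_neg.aemeasurable
  simp only [gaussianReal_map_neg, neg_zero] at h
  exact h

lemma integral_dotProduct_stdGaussian (β : ι → ℝ) : ∫ x, β ⬝ᵥ x ∂stdGaussian ι = 0 := by
  have h := integral_map (μ := stdGaussian ι) (f := fun x => β ⬝ᵥ x) measurable_neg.aemeasurable
    (by fun_prop)
  simp only [map_neg_stdGaussian, dotProduct_neg, integral_neg] at h
  linarith

end StdGaussian

lemma vecMul_dotProduct_vecMul_self {m n R : Type*} [Fintype m] [Fintype n] [CommSemiring R]
    (S : Matrix m n R) (β : m → R) : (β ᵥ* S) ⬝ᵥ (β ᵥ* S) = (S * Sᵀ) *ᵥ β ⬝ᵥ β := by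
  rw [← dotProduct_mulVec β S, ← mulVec_transpose, mulVec_mulVec, dotProduct_comm]

section GaussianVector

variable {Ω ι : Type*} [MeasurableSpace Ω] [Fintype ι] {μ : Measure Ω} {X : Ω → ι → ℝ}
  {S : Matrix ι ι ℝ}

lemma lintegral_ofReal_exp_dotProduct_of_map_eq (hX : Measurable X)
    (hlaw : μ.map X = (stdGaussian ι).map S.mulVec) (β : ι → ℝ) :
    ∫⁻ ω, ENNReal.ofReal (exp (β ⬝ᵥ X ω)) ∂μ
      = ENNReal.ofReal (exp ((S * Sᵀ) *ᵥ β ⬝ᵥ β / 2)) := by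
  have hmeas : Measurable fun x : ι → ℝ => ENNReal.ofReal (exp (β ⬝ᵥ x)) := by fun_prop
  rw [← lintegral_map hmeas hX, hlaw, lintegral_map hmeas (by fun_prop)]
  simp_rw [dotProduct_mulVec]
  rw [lintegral_ofReal_exp_dotProduct_stdGaussian, vecMul_dotProduct_vecMul_self]

lemma integral_dotProduct_of_map_eq (hX : Measurable X)
    (hlaw : μ.map X = (stdGaussian ι).map S.mulVec) (β : ι → ℝ) :
    ∫ ω, β ⬝ᵥ X ω ∂μ = 0 := by
  rw [← integral_map hX.aemeasurable (by fun_prop), hlaw, integral_map (by fun_prop) (by fun_prop)]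
  simp_rw [dotProduct_mulVec]
  exact integral_dotProduct_stdGaussian _

lemma pMeanE_ofReal_exp_dotProduct_of_map_eq (hX : Measurable X)
    (hlaw : μ.map X = (stdGaussian ι).map S.mulVec) (β : ι → ℝ) (p : ℝ) :
    pMeanE μ (fun ω => ENNReal.ofReal (exp (β ⬝ᵥ X ω))) p
      = ENNReal.ofReal (exp (p * ((S * Sᵀ) *ᵥ β ⬝ᵥ β) / 2)) := by
  rcases eq_or_ne p 0 with rfl | hp
  · simp [pMeanE, ENNReal.toReal_ofReal (exp_pos _).le, integral_dotProduct_of_map_eq hX hlaw]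
  have hpow : ∀ ω, ENNReal.ofReal (exp (β ⬝ᵥ X ω)) ^ p
      = ENNReal.ofReal (exp ((p • β) ⬝ᵥ X ω)) := fun ω => by
    rw [ENNReal.ofReal_rpow_of_pos (exp_pos _), ← exp_mul, smul_dotProduct, smul_eq_mul, mul_comm]
  rw [pMeanE, if_neg hp]
  simp_rw [hpow]
  rw [lintegral_ofReal_exp_dotProduct_of_map_eq hX hlaw, ENNReal.ofReal_rpow_of_pos (exp_pos _),
    ← exp_mul]
  congr 2
  simp only [mulVec_smul, smul_dotProduct, dotProduct_smul, smul_eq_mul]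
  field_simp

end GaussianVector

section Blocks

variable {ι R : Type*} {κ : ι → Type*} [DecidableEq ι] [CommSemiring R]

def restrictBlock (α : (Σ i, κ i) → R) (i : ι) : (Σ i, κ i) → R :=
  fun a => if a.1 = i then α a else 0

/-- The matrix `P = diag(p₁T₁₁, …, p_mT_mm)` of block-scaled diagonal blocks of `T`. -/
def blockScale (p : ι → R) (T : Matrix (Σ i, κ i) (Σ i, κ i) R) :
    Matrix (Σ i, κ i) (Σ i, κ i) R :=
  Matrix.of fun a b => if a.1 = b.1 then p a.1 * T a b else 0

lemma Matrix.IsHermitian.blockScale [StarRing R] [TrivialStar R]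
    {T : Matrix (Σ i, κ i) (Σ i, κ i) R} (hT : T.IsHermitian) (p : ι → R) :
    (_root_.blockScale p T).IsHermitian := by
  ext a b
  simp only [conjTranspose_apply, _root_.blockScale, of_apply, star_trivial, @eq_comm _ b.1]
  split_ifs with hab
  · rw [hab, ← hT.apply b a, star_trivial]
  · rfl

variable [Fintype ι] [∀ i, Fintype (κ i)]

lemma restrictBlock_dotProduct (α x : (Σ i, κ i) → R) (i : ι) :
    restrictBlock α i ⬝ᵥ x = ∑ j, α ⟨i, j⟩ * x ⟨i, j⟩ := by
  rw [dotProduct, Fintype.sum_sigma, Finset.sum_eq_single i]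
  · simp [restrictBlock]
  · intro b _ hb
    simp [restrictBlock, hb]
  · simp

lemma blockScale_mulVec_dotProduct (p : ι → R) (T : Matrix (Σ i, κ i) (Σ i, κ i) R)
    (α : (Σ i, κ i) → R) :
    blockScale p T *ᵥ α ⬝ᵥ α = ∑ i, p i * (T *ᵥ restrictBlock α i ⬝ᵥ restrictBlock α i) := by
  simp only [dotProduct, mulVec, blockScale, restrictBlock, of_apply, Finset.mul_sum]
  rw [Finset.sum_comm]
  refine Finset.sum_congr rfl fun a _ => ?_
  simp only [mul_ite, mul_zero, Finset.sum_ite_eq, Finset.mem_univ, if_true, ite_mul, zero_mul,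
    Finset.mul_sum, Finset.sum_mul]
  refine Finset.sum_congr rfl fun b _ => ?_
  simp only [@eq_comm _ b.1, mul_assoc]

end Blocks

lemma prod_ofReal_exp_sum_sigma {ι : Type*} {κ : ι → Type*} [Fintype ι] [∀ i, Fintype (κ i)]
    (α x : (Σ i, κ i) → ℝ) :
    ∏ i, ENNReal.ofReal (exp (∑ j, α ⟨i, j⟩ * x ⟨i, j⟩)) = ENNReal.ofReal (exp (α ⬝ᵥ x)) := by
  rw [← ENNReal.ofReal_prod_of_nonneg fun i _ => (exp_pos _).le, ← exp_sum, dotProduct,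
    Fintype.sum_sigma]

lemma Matrix.posSemidef_sub_of_mulVec_dotProduct_le {n : Type*} [Fintype n]
    {A B : Matrix n n ℝ} (hA : A.IsHermitian) (hB : B.IsHermitian)
    (h : ∀ v, B *ᵥ v ⬝ᵥ v ≤ A *ᵥ v ⬝ᵥ v) : (A - B).PosSemidef :=
  .of_dotProduct_mulVec_nonneg (hA.sub hB) fun v => by
    rw [star_trivial, sub_mulVec, dotProduct_sub, dotProduct_comm v, dotProduct_comm v]
    linarith [h v]

theorem stmt3_general
    {Ω : Type*} [MeasurableSpace Ω] (μ : Measure Ω)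
    (m : ℕ) (n : Fin m → ℕ)
    (X : Ω → ((Σ i : Fin m, Fin (n i)) → ℝ)) (hX : Measurable X)
    (T S : Matrix (Σ i : Fin m, Fin (n i)) (Σ i : Fin m, Fin (n i)) ℝ)
    (hTS : S * Sᵀ = T)
    (hlaw : Measure.map X μ = Measure.map S.mulVec (stdGaussian (Σ i : Fin m, Fin (n i))))
    (p : Fin m → ℝ)
    (P : Matrix (Σ i : Fin m, Fin (n i)) (Σ i : Fin m, Fin (n i)) ℝ)
    (hP : ∀ a b, P a b = if a.1 = b.1 then p a.1 * T a b else 0) :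
    (∀ α : (Σ i : Fin m, Fin (n i)) → ℝ,
      ∫⁻ ω, ∏ i, ENNReal.ofReal (Real.exp (∑ j, α ⟨i, j⟩ * X ω ⟨i, j⟩)) ∂μ
        = ENNReal.ofReal (Real.exp ((1 / 2) * (T.mulVec α ⬝ᵥ α)))) ∧
    (∀ α : (Σ i : Fin m, Fin (n i)) → ℝ,
      ∏ i, pMeanE μ (fun ω => ENNReal.ofReal (Real.exp (∑ j, α ⟨i, j⟩ * X ω ⟨i, j⟩))) (p i)
        = ENNReal.ofReal (Real.exp ((1 / 2) * (P.mulVec α ⬝ᵥ α)))) ∧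
    ((∀ f : ∀ i : Fin m, (Fin (n i) → ℝ) → ℝ, (∀ i, Measurable (f i)) →
        (∀ i x, 0 ≤ f i x) →
        ∫⁻ ω, ∏ i, ENNReal.ofReal (f i (fun j => X ω ⟨i, j⟩)) ∂μ
          ≤ ∏ i, pMeanE μ (fun ω => ENNReal.ofReal (f i (fun j => X ω ⟨i, j⟩))) (p i)) →
      (P - T).PosSemidef) ∧
    ((∀ f : ∀ i : Fin m, (Fin (n i) → ℝ) → ℝ, (∀ i, Measurable (f i)) →
        (∀ i x, 0 ≤ f i x) →
        ∏ i, pMeanE μ (fun ω => ENNReal.ofReal (f i (fun j => X ω ⟨i, j⟩))) (p i)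
          ≤ ∫⁻ ω, ∏ i, ENNReal.ofReal (f i (fun j => X ω ⟨i, j⟩)) ∂μ) →
      (T - P).PosSemidef) ∧
    (∀ α : (Σ i : Fin m, Fin (n i)) → ℝ, (T - P).mulVec α = 0 →
      ∫⁻ ω, ∏ i, ENNReal.ofReal (Real.exp (∑ j, α ⟨i, j⟩ * X ω ⟨i, j⟩)) ∂μ
        = ∏ i, pMeanE μ (fun ω => ENNReal.ofReal (Real.exp (∑ j, α ⟨i, j⟩ * X ω ⟨i, j⟩))) (p i)) := by
  obtain rfl : P = blockScale p T := Matrix.ext hP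
  have hT : T.IsHermitian := by
    simpa [← hTS] using isSymm_mul_transpose_self S
  have hmgf (α : (Σ i : Fin m, Fin (n i)) → ℝ) :
      ∫⁻ ω, ∏ i, ENNReal.ofReal (exp (∑ j, α ⟨i, j⟩ * X ω ⟨i, j⟩)) ∂μ
        = ENNReal.ofReal (exp ((1 / 2) * (T *ᵥ α ⬝ᵥ α))) := by
    simp_rw [prod_ofReal_exp_sum_sigma, lintegral_ofReal_exp_dotProduct_of_map_eq hX hlaw, hTS,
      one_div_mul_eq_div]
  have hpmean (α : (Σ i : Fin m, Fin (n i)) → ℝ) :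
      ∏ i, pMeanE μ (fun ω => ENNReal.ofReal (exp (∑ j, α ⟨i, j⟩ * X ω ⟨i, j⟩))) (p i)
        = ENNReal.ofReal (exp ((1 / 2) * (blockScale p T *ᵥ α ⬝ᵥ α))) := by
    have hblock (i : Fin m) (ω : Ω) :
        ∑ j, α ⟨i, j⟩ * X ω ⟨i, j⟩ = restrictBlock α i ⬝ᵥ X ω :=
      (restrictBlock_dotProduct α (X ω) i).symm
    simp_rw [hblock, pMeanE_ofReal_exp_dotProduct_of_map_eq hX hlaw, hTS]
    rw [← ENNReal.ofReal_prod_of_nonneg fun i _ => (exp_pos _).le, ← exp_sum,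
      blockScale_mulVec_dotProduct, Finset.mul_sum]
    simp_rw [one_div_mul_eq_div]
  have hexp_le_iff {a b : ℝ} :
      ENNReal.ofReal (exp ((1 / 2) * a)) ≤ ENNReal.ofReal (exp ((1 / 2) * b)) ↔ a ≤ b := by
    rw [ENNReal.ofReal_le_ofReal_iff (exp_pos _).le, exp_le_exp, mul_le_mul_iff_right₀ one_half_pos]
  refine ⟨hmgf, hpmean, fun h => ?_, fun h => ?_, fun α hα => ?_⟩
  · refine posSemidef_sub_of_mulVec_dotProduct_le (hT.blockScale p) hT fun α => ?_
    have := h (fun i y => exp (∑ j, α ⟨i, j⟩ * y j)) (fun i => by fun_prop)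
      fun _ _ => (exp_pos _).le
    beta_reduce at this
    rwa [hmgf, hpmean, hexp_le_iff] at this
  · refine posSemidef_sub_of_mulVec_dotProduct_le hT (hT.blockScale p) fun α => ?_
    have := h (fun i y => exp (∑ j, α ⟨i, j⟩ * y j)) (fun i => by fun_prop)
      fun _ _ => (exp_pos _).le
    beta_reduce at this
    rwa [hmgf, hpmean, hexp_le_iff] at this
  · rw [sub_mulVec, sub_eq_zero] at hα
    rw [hmgf, hpmean, hα]

/-- **Remarks 1.3 and 1.4**: exponential test functions compute to
`exp(½⟨Tα,α⟩)` and `exp(½⟨Pα,α⟩)`; hence validity of either inequality for all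
nonnegative measurable functions forces the corresponding matrix inequality, and
`α ∈ Ker(T - P)` yields equality for the exponential functions. -/
theorem stmt3
    {Ω : Type*} [MeasurableSpace Ω] (μ : Measure Ω) [IsProbabilityMeasure μ]
    (m : ℕ) (hm : 0 < m) (n : Fin m → ℕ) (hn : ∀ i, 0 < n i)
    (X : Ω → ((Σ i : Fin m, Fin (n i)) → ℝ)) (hX : Measurable X)
    (T S : Matrix (Σ i : Fin m, Fin (n i)) (Σ i : Fin m, Fin (n i)) ℝ)
    (hTS : S * Sᵀ = T)
    (hlaw : Measure.map X μ = Measure.map S.mulVec (stdGaussian (Σ i : Fin m, Fin (n i))))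
    (p : Fin m → ℝ)
    (P : Matrix (Σ i : Fin m, Fin (n i)) (Σ i : Fin m, Fin (n i)) ℝ)
    (hP : ∀ a b, P a b = if a.1 = b.1 then p a.1 * T a b else 0) :
    (∀ α : (Σ i : Fin m, Fin (n i)) → ℝ,
      ∫⁻ ω, ∏ i, ENNReal.ofReal (Real.exp (∑ j, α ⟨i, j⟩ * X ω ⟨i, j⟩)) ∂μ
        = ENNReal.ofReal (Real.exp ((1 / 2) * (T.mulVec α ⬝ᵥ α)))) ∧
    (∀ α : (Σ i : Fin m, Fin (n i)) → ℝ,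
      ∏ i, pMeanE μ (fun ω => ENNReal.ofReal (Real.exp (∑ j, α ⟨i, j⟩ * X ω ⟨i, j⟩))) (p i)
        = ENNReal.ofReal (Real.exp ((1 / 2) * (P.mulVec α ⬝ᵥ α)))) ∧
    ((∀ f : ∀ i : Fin m, (Fin (n i) → ℝ) → ℝ, (∀ i, Measurable (f i)) →
        (∀ i x, 0 ≤ f i x) →
        ∫⁻ ω, ∏ i, ENNReal.ofReal (f i (fun j => X ω ⟨i, j⟩)) ∂μ
          ≤ ∏ i, pMeanE μ (fun ω => ENNReal.ofReal (f i (fun j => X ω ⟨i, j⟩))) (p i)) →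
      (P - T).PosSemidef) ∧
    ((∀ f : ∀ i : Fin m, (Fin (n i) → ℝ) → ℝ, (∀ i, Measurable (f i)) →
        (∀ i x, 0 ≤ f i x) →
        ∏ i, pMeanE μ (fun ω => ENNReal.ofReal (f i (fun j => X ω ⟨i, j⟩))) (p i)
          ≤ ∫⁻ ω, ∏ i, ENNReal.ofReal (f i (fun j => X ω ⟨i, j⟩)) ∂μ) →
      (T - P).PosSemidef) ∧
    (∀ α : (Σ i : Fin m, Fin (n i)) → ℝ, (T - P).mulVec α = 0 →
      ∫⁻ ω, ∏ i, ENNReal.ofReal (Real.exp (∑ j, α ⟨i, j⟩ * X ω ⟨i, j⟩)) ∂μ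
        = ∏ i, pMeanE μ (fun ω => ENNReal.ofReal (Real.exp (∑ j, α ⟨i, j⟩ * X ω ⟨i, j⟩))) (p i)) :=
  stmt3_general μ m n X hX T S hTS hlaw p P hP
end

section
/- (Prékopa–Leindler inequality.) Let f, g, h be nonnegative measurable functions on ℝⁿ and λ ∈ [0,1] such that h(λx + (1−λ)y) ≥ f(x)^λ g(y)^{1−λ} for all x, y ∈ ℝⁿ. Then ∫_{ℝⁿ} h(x) dx ≥ (∫_{ℝⁿ} f(x) dx)^λ (∫_{ℝⁿ} g(x) dx)^{1−λ}. -/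
/-!
In dimension one, the hypothesis gives `λ • {f > s} + (1 - λ) • {g > s} ⊆ {h > s}` for every
level `s`. When `f` and `g` have the same supremum these superlevel sets are nonempty for the same
`s`, so the one-dimensional Brunn–Minkowski inequality `|A| + |B| ≤ |A + B|` and the layer-cake
formula give `λ ∫ f + (1 - λ) ∫ g ≤ ∫ h`. Rescaling `g` to match the suprema, weighted AM–GM turns
this into the multiplicative bound; unbounded functions are handled by truncation. The inequality
passes to products of measures by applying it on each fibre and then to the marginals (Tonelli),
which gives `ℝⁿ` by induction on `n`.
-/

open MeasureTheory Set Filter Pointwise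
open scoped ENNReal Topology

namespace Real

theorem volume_add_volume_le_volume_add_of_isCompact {K L : Set ℝ} (hK : IsCompact K)
    (hL : IsCompact L) (hK₀ : K.Nonempty) (hL₀ : L.Nonempty) :
    volume K + volume L ≤ volume (K + L) := by
  obtain ⟨a, ha, haK⟩ := hK.exists_isGreatest hK₀
  obtain ⟨b, hb, hbL⟩ := hL.exists_isLeast hL₀
  -- the translates `K + b` and `a + L` of `K` and `L` lie in `K + L` and meet only at `a + b`
  set K' := (· + -b) ⁻¹' K
  set L' := (· + -a) ⁻¹' L
  have hdisj : AEDisjoint volume K' L' := by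
    refine measure_mono_null (fun z ⟨hzK, hzL⟩ => ?_) (measure_singleton (a + b))
    have := haK hzK
    have := hbL hzL
    simp only [mem_singleton_iff]
    linarith
  calc volume K + volume L = volume (K' ∪ L') := by
        rw [measure_union₀ (hL.measurableSet.preimage (measurable_add_const _)).nullMeasurableSet
          hdisj, measure_preimage_add_right, measure_preimage_add_right]
    _ ≤ volume (K + L) := measure_mono <|
        union_subset (fun z hz => ⟨_, hz, b, hb, by simp⟩) fun z hz => ⟨a, ha, _, hz, by simp⟩

theorem volume_add_volume_le_volume_add {A B : Set ℝ} (hA : MeasurableSet A)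
    (hB : MeasurableSet B) (hA₀ : A.Nonempty) (hB₀ : B.Nonempty) :
    volume A + volume B ≤ volume (A + B) := by
  obtain ⟨a, ha⟩ := hA₀
  obtain ⟨b, hb⟩ := hB₀
  rw [hA.measure_eq_iSup_isCompact, hB.measure_eq_iSup_isCompact]
  simp only [iSup_and']
  refine ENNReal.biSup_add_biSup_le' ⟨∅, empty_subset _, isCompact_empty⟩
    ⟨∅, empty_subset _, isCompact_empty⟩ fun K ⟨hKA, hK⟩ L ⟨hLB, hL⟩ => ?_
  -- adjoining a point makes the compact subsets nonempty without shrinking them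
  calc volume K + volume L ≤ volume (insert a K) + volume (insert b L) :=
        add_le_add (measure_mono (subset_insert _ _)) (measure_mono (subset_insert _ _))
    _ ≤ volume (insert a K + insert b L) :=
        volume_add_volume_le_volume_add_of_isCompact (hK.insert a) (hL.insert b)
          (insert_nonempty _ _) (insert_nonempty _ _)
    _ ≤ volume (A + B) :=
        measure_mono (add_subset_add (insert_subset ha hKA) (insert_subset hb hLB))

end Real

theorem volume_setOf_ofReal_lt_inter_Ioi (c : ℝ≥0∞) :
    volume ({t : ℝ | ENNReal.ofReal t < c} ∩ Ioi 0) = c := by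
  rcases eq_or_ne c ∞ with rfl | hc
  · simp
  · have : {t : ℝ | ENNReal.ofReal t < c} ∩ Ioi 0 = Ioo 0 c.toReal := by
      ext t
      simp +contextual [ENNReal.ofReal_lt_iff_lt_toReal, le_of_lt, hc, and_comm]
    simp [this, hc]

theorem lintegral_eq_lintegral_meas_ofReal_lt {α : Type*} [MeasurableSpace α] (μ : Measure α)
    [SFinite μ] {f : α → ℝ≥0∞} (hf : Measurable f) :
    ∫⁻ x, f x ∂μ = ∫⁻ t in Ioi 0, μ {x | ENNReal.ofReal t < f x} := by
  set S := {p : α × ℝ | ENNReal.ofReal p.2 < f p.1}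
  have hS : MeasurableSet S :=
    measurableSet_lt (ENNReal.measurable_ofReal.comp measurable_snd) (hf.comp measurable_fst)
  calc ∫⁻ x, f x ∂μ = ∫⁻ x, (∫⁻ t in Ioi (0 : ℝ), S.indicator 1 (x, t)) ∂μ := by
        refine lintegral_congr fun x => ?_
        rw [← volume_setOf_ofReal_lt_inter_Ioi (f x), ← Measure.restrict_apply' measurableSet_Ioi]
        exact (lintegral_indicator_one (measurable_prodMk_left hS)).symm
    _ = ∫⁻ t in Ioi (0 : ℝ), ∫⁻ x, S.indicator 1 (x, t) ∂μ :=
        lintegral_lintegral_swap (f := fun x t => S.indicator 1 (x, t))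
          (measurable_one.indicator hS).aemeasurable
    _ = ∫⁻ t in Ioi 0, μ {x | ENNReal.ofReal t < f x} :=
        lintegral_congr fun t => lintegral_indicator_one (measurable_prodMk_right hS)

theorem ENNReal.geom_mean_le_arith_mean2_weighted {l : ℝ} (hl₀ : 0 < l) (hl₁ : l < 1)
    (a b : ℝ≥0∞) :
    a ^ l * b ^ (1 - l) ≤ ENNReal.ofReal l * a + ENNReal.ofReal (1 - l) * b := by
  have hl₁' : 0 < 1 - l := sub_pos.2 hl₁
  have := ENNReal.young_inequality (a ^ l) (b ^ (1 - l))
    (Real.HolderConjugate.inv_inv hl₀ hl₁' (add_sub_cancel l 1))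
  rwa [← ENNReal.rpow_mul, ← ENNReal.rpow_mul, mul_inv_cancel₀ hl₀.ne', mul_inv_cancel₀ hl₁'.ne',
    ENNReal.rpow_one, ENNReal.rpow_one, ENNReal.ofReal_inv_of_pos hl₀,
    ENNReal.ofReal_inv_of_pos hl₁', div_eq_mul_inv, div_eq_mul_inv, inv_inv, inv_inv, mul_comm a,
    mul_comm b] at this

section PrekopaLeindler

variable {E E' : Type*} [AddCommMonoid E] [Module ℝ E] [AddCommMonoid E'] [Module ℝ E']

theorem smul_setOf_lt_add_smul_setOf_lt_subset {f g h : E → ℝ≥0∞} {l : ℝ} (hl : l ∈ Ioo 0 1)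
    (hfgh : ∀ x y, f x ^ l * g y ^ (1 - l) ≤ h (l • x + (1 - l) • y)) (s : ℝ≥0∞) :
    l • {x | s < f x} + (1 - l) • {y | s < g y} ⊆ {z | s < h z} := by
  rintro _ ⟨_, ⟨x, hx, rfl⟩, _, ⟨y, hy, rfl⟩, rfl⟩
  calc s = s ^ l * s ^ (1 - l) := by
        rw [← ENNReal.rpow_add_of_nonneg _ _ hl.1.le (sub_nonneg.2 hl.2.le), add_sub_cancel,
          ENNReal.rpow_one]
    _ < f x ^ l * g y ^ (1 - l) :=
        ENNReal.mul_lt_mul (ENNReal.rpow_lt_rpow hx hl.1)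
          (ENNReal.rpow_lt_rpow hy (sub_pos.2 hl.2))
    _ ≤ h (l • x + (1 - l) • y) := hfgh x y

variable [MeasurableSpace E] [MeasurableSpace E']

def SatisfiesPrekopaLeindler (μ : Measure E) : Prop :=
  ∀ (f g h : E → ℝ≥0∞) (l : ℝ), Measurable f → Measurable g → Measurable h → l ∈ Ioo 0 1 →
    (∀ x y, f x ^ l * g y ^ (1 - l) ≤ h (l • x + (1 - l) • y)) →
    (∫⁻ x, f x ∂μ) ^ l * (∫⁻ x, g x ∂μ) ^ (1 - l) ≤ ∫⁻ x, h x ∂μ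

theorem satisfiesPrekopaLeindler_dirac (a : E) : SatisfiesPrekopaLeindler (Measure.dirac a) := by
  intro f g h l hf hg hh _ hfgh
  simpa [lintegral_dirac' _ hf, lintegral_dirac' _ hg, lintegral_dirac' _ hh, ← add_smul]
    using hfgh a a

theorem SatisfiesPrekopaLeindler.prod {μ : Measure E} {ν : Measure E'} [SFinite ν]
    (hμ : SatisfiesPrekopaLeindler μ) (hν : SatisfiesPrekopaLeindler ν) :
    SatisfiesPrekopaLeindler (μ.prod ν) := by
  intro f g h l hf hg hh hl hfgh
  rw [lintegral_prod _ hf.aemeasurable, lintegral_prod _ hg.aemeasurable,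
    lintegral_prod _ hh.aemeasurable]
  exact hμ _ _ _ l hf.lintegral_prod_right' hg.lintegral_prod_right' hh.lintegral_prod_right' hl
    fun x₁ x₂ => hν _ _ _ l (hf.comp measurable_prodMk_left) (hg.comp measurable_prodMk_left)
      (hh.comp measurable_prodMk_left) hl fun y₁ y₂ => hfgh (x₁, y₁) (x₂, y₂)

theorem SatisfiesPrekopaLeindler.map_linearMap {μ : Measure E} {ν : Measure E'}
    (hμ : SatisfiesPrekopaLeindler μ) (T : E →ₗ[ℝ] E') (hT : MeasurePreserving T μ ν) :
    SatisfiesPrekopaLeindler ν := by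
  intro f g h l hf hg hh hl hfgh
  rw [← hT.lintegral_comp hf, ← hT.lintegral_comp hg, ← hT.lintegral_comp hh]
  exact hμ _ _ _ l (hf.comp hT.measurable) (hg.comp hT.measurable) (hh.comp hT.measurable) hl
    fun x y => by simpa using hfgh (T x) (T y)

end PrekopaLeindler

theorem prekopaLeindler_additive_of_iSup_eq {f g h : ℝ → ℝ≥0∞} (hf : Measurable f)
    (hg : Measurable g) (hh : Measurable h) {l : ℝ} (hl : l ∈ Ioo 0 1) (hfg : ⨆ x, f x = ⨆ x, g x)
    (hfgh : ∀ x y, f x ^ l * g y ^ (1 - l) ≤ h (l • x + (1 - l) • y)) :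
    ENNReal.ofReal l * (∫⁻ x, f x) + ENNReal.ofReal (1 - l) * ∫⁻ x, g x ≤ ∫⁻ x, h x := by
  have hlevel : ∀ s : ℝ≥0∞, ENNReal.ofReal l * volume {x | s < f x}
      + ENNReal.ofReal (1 - l) * volume {x | s < g x} ≤ volume {x | s < h x} := by
    intro s
    by_cases hs : s < ⨆ x, f x
    · have hA : {x | s < f x}.Nonempty := lt_iSup_iff.1 hs
      have hB : {x | s < g x}.Nonempty := lt_iSup_iff.1 (hfg ▸ hs : s < ⨆ x, g x)
      calc _ = volume (l • {x | s < f x}) + volume ((1 - l) • {x | s < g x}) := by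
            rw [Measure.addHaar_smul_of_nonneg _ hl.1.le,
              Measure.addHaar_smul_of_nonneg _ (sub_nonneg.2 hl.2.le)]
            simp
        _ ≤ volume (l • {x | s < f x} + (1 - l) • {x | s < g x}) :=
            Real.volume_add_volume_le_volume_add
              ((measurableSet_lt measurable_const hf).const_smul₀ l)
              ((measurableSet_lt measurable_const hg).const_smul₀ (1 - l)) hA.smul_set hB.smul_set
        _ ≤ volume {x | s < h x} :=
            measure_mono (smul_setOf_lt_add_smul_setOf_lt_subset hl hfgh s)
    · have hA : {x | s < f x} = ∅ :=
        eq_empty_of_forall_notMem fun x hx => hs (hx.trans_le (le_iSup f x))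
      have hB : {x | s < g x} = ∅ :=
        eq_empty_of_forall_notMem fun x hx => hs (hfg ▸ hx.trans_le (le_iSup g x))
      simp [hA, hB]
  have hmeas : ∀ φ : ℝ → ℝ≥0∞, Measurable fun t : ℝ => volume {x | ENNReal.ofReal t < φ x} :=
    fun φ => Antitone.measurable fun t t' htt' =>
      measure_mono fun x hx => (ENNReal.ofReal_le_ofReal htt').trans_lt hx
  rw [lintegral_eq_lintegral_meas_ofReal_lt volume hf,
    lintegral_eq_lintegral_meas_ofReal_lt volume hg,
    lintegral_eq_lintegral_meas_ofReal_lt volume hh, ← lintegral_const_mul _ (hmeas f),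
    ← lintegral_const_mul _ (hmeas g), ← lintegral_add_left ((hmeas f).const_mul _)]
  exact lintegral_mono fun t => hlevel _

theorem lintegral_rpow_mul_lintegral_rpow_le_of_iSup_ne_top {f g h : ℝ → ℝ≥0∞}
    (hf : Measurable f) (hg : Measurable g) (hh : Measurable h) {l : ℝ} (hl : l ∈ Ioo 0 1)
    (hf_top : ⨆ x, f x ≠ ∞) (hg_top : ⨆ x, g x ≠ ∞)
    (hfgh : ∀ x y, f x ^ l * g y ^ (1 - l) ≤ h (l • x + (1 - l) • y)) :
    (∫⁻ x, f x) ^ l * (∫⁻ x, g x) ^ (1 - l) ≤ ∫⁻ x, h x := by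
  have hl₁ : 0 < 1 - l := sub_pos.2 hl.2
  rcases eq_or_ne (⨆ x, f x) 0 with hf0 | hf0
  · simp [ENNReal.iSup_eq_zero.1 hf0, hl.1]
  rcases eq_or_ne (⨆ x, g x) 0 with hg0 | hg0
  · simp [ENNReal.iSup_eq_zero.1 hg0, hl₁]
  -- rescaling `g` by `c` makes the suprema agree, and `h` absorbs the factor `c ^ (1 - l)`
  set c := (⨆ x, f x) / ⨆ x, g x
  have hc_top : c ≠ ∞ := ENNReal.div_ne_top hf_top hg0
  have hc : c ^ (1 - l) ≠ 0 := (ENNReal.rpow_pos (ENNReal.div_pos hf0 hg_top) hc_top).ne'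
  have hc' : c ^ (1 - l) ≠ ∞ := ENNReal.rpow_ne_top_of_nonneg hl₁.le hc_top
  have key := prekopaLeindler_additive_of_iSup_eq hf (hg.const_mul c)
    (hh.const_mul (c ^ (1 - l))) hl (by rw [← ENNReal.mul_iSup, ENNReal.div_mul_cancel hg0 hg_top])
    fun x y => by
      rw [ENNReal.mul_rpow_of_nonneg _ _ hl₁.le, mul_left_comm]
      gcongr
      exact hfgh x y
  rw [lintegral_const_mul _ hg, lintegral_const_mul _ hh] at key
  rw [← ENNReal.mul_le_mul_iff_right hc hc']
  calc c ^ (1 - l) * ((∫⁻ x, f x) ^ l * (∫⁻ x, g x) ^ (1 - l))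
      = (∫⁻ x, f x) ^ l * (c * ∫⁻ x, g x) ^ (1 - l) := by
        rw [ENNReal.mul_rpow_of_nonneg _ _ hl₁.le]; ring
    _ ≤ ENNReal.ofReal l * (∫⁻ x, f x) + ENNReal.ofReal (1 - l) * (c * ∫⁻ x, g x) :=
        ENNReal.geom_mean_le_arith_mean2_weighted hl.1 hl.2 _ _
    _ ≤ c ^ (1 - l) * ∫⁻ x, h x := key

theorem tendsto_lintegral_min_natCast {α : Type*} [MeasurableSpace α] (μ : Measure α)
    {f : α → ℝ≥0∞} (hf : Measurable f) :
    Tendsto (fun n : ℕ => ∫⁻ x, min (f x) n ∂μ) atTop (𝓝 (∫⁻ x, f x ∂μ)) :=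
  lintegral_tendsto_of_tendsto_of_monotone (fun n => (hf.min measurable_const).aemeasurable)
    (ae_of_all _ fun x m n hmn => min_le_min_left _ (Nat.cast_le.2 hmn))
    (ae_of_all _ fun x => by simpa using tendsto_const_nhds.min ENNReal.tendsto_nat_nhds_top)

theorem satisfiesPrekopaLeindler_volume_real : SatisfiesPrekopaLeindler (volume : Measure ℝ) := by
  intro f g h l hf hg hh hl hfgh
  have hl₁ : 0 < 1 - l := sub_pos.2 hl.2
  rcases eq_or_ne (∫⁻ x, f x) 0 with hf0 | hf0
  · simp [hf0, hl.1]
  rcases eq_or_ne (∫⁻ x, g x) 0 with hg0 | hg0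
  · simp [hg0, hl₁]
  have htrunc : ∀ n : ℕ, (∫⁻ x, min (f x) n) ^ l * (∫⁻ x, min (g x) n) ^ (1 - l) ≤ ∫⁻ x, h x :=
    fun n => lintegral_rpow_mul_lintegral_rpow_le_of_iSup_ne_top (hf.min measurable_const)
      (hg.min measurable_const) hh hl
      (ne_top_of_le_ne_top (ENNReal.natCast_ne_top n) (iSup_le fun x => min_le_right _ _))
      (ne_top_of_le_ne_top (ENNReal.natCast_ne_top n) (iSup_le fun x => min_le_right _ _))
      fun x y => (mul_le_mul' (ENNReal.rpow_le_rpow (min_le_left _ _) hl.1.le)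
        (ENNReal.rpow_le_rpow (min_le_left _ _) hl₁.le)).trans (hfgh x y)
  refine le_of_tendsto' (ENNReal.Tendsto.mul
    ((tendsto_lintegral_min_natCast volume hf).ennrpow_const l)
    (Or.inl (ENNReal.rpow_pos_of_nonneg (pos_iff_ne_zero.2 hf0) hl.1.le).ne')
    ((tendsto_lintegral_min_natCast volume hg).ennrpow_const (1 - l))
    (Or.inl (ENNReal.rpow_pos_of_nonneg (pos_iff_ne_zero.2 hg0) hl₁.le).ne')) htrunc

theorem volume_preserving_finConsLinearEquiv (n : ℕ) :
    MeasurePreserving (Fin.consLinearEquiv ℝ fun _ : Fin (n + 1) => ℝ) := by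
  convert (volume_preserving_piFinSuccAbove (fun _ : Fin (n + 1) => ℝ) 0).symm using 1
  ext p i
  simp

theorem satisfiesPrekopaLeindler_volume_pi (n : ℕ) :
    SatisfiesPrekopaLeindler (volume : Measure (Fin n → ℝ)) := by
  induction n with
  | zero =>
    rw [volume_pi, Measure.pi_of_empty]
    exact satisfiesPrekopaLeindler_dirac _
  | succ n ih =>
    exact (satisfiesPrekopaLeindler_volume_real.prod ih).map_linearMap _
      (volume_preserving_finConsLinearEquiv n)

theorem stmt16_general
    (n : ℕ) (f g h : (Fin n → ℝ) → ℝ)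
    (hf : Measurable f) (hg : Measurable g) (hh : Measurable h)
    (hf0 : ∀ x, 0 ≤ f x) (hg0 : ∀ x, 0 ≤ g x)
    (l : ℝ) (hl : l ∈ Set.Icc (0 : ℝ) 1)
    (hcond : ∀ x y, f x ^ l * g y ^ (1 - l) ≤ h (l • x + (1 - l) • y)) :
    (∫⁻ x, ENNReal.ofReal (f x)) ^ l * (∫⁻ x, ENNReal.ofReal (g x)) ^ (1 - l)
      ≤ ∫⁻ x, ENNReal.ofReal (h x) := by
  obtain ⟨hl₀, hl₁⟩ := hl
  have hcond' : ∀ x y, ENNReal.ofReal (f x) ^ l * ENNReal.ofReal (g y) ^ (1 - l)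
      ≤ ENNReal.ofReal (h (l • x + (1 - l) • y)) := fun x y => by
    rw [ENNReal.ofReal_rpow_of_nonneg (hf0 x) hl₀, ENNReal.ofReal_rpow_of_nonneg (hg0 y)
      (sub_nonneg.2 hl₁), ← ENNReal.ofReal_mul (Real.rpow_nonneg (hf0 x) l)]
    exact ENNReal.ofReal_le_ofReal (hcond x y)
  rcases hl₀.eq_or_lt with rfl | hl₀
  · simpa using lintegral_mono fun y => by simpa using hcond' 0 y
  rcases hl₁.eq_or_lt with rfl | hl₁
  · simpa using lintegral_mono fun x => by simpa using hcond' x 0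
  exact satisfiesPrekopaLeindler_volume_pi n _ _ _ l hf.ennreal_ofReal hg.ennreal_ofReal
    hh.ennreal_ofReal ⟨hl₀, hl₁⟩ hcond'

/-- **Prékopa-Leindler inequality**: if `h(λx + (1-λ)y) ≥ f(x)^λ g(y)^{1-λ}`
for all `x, y`, then `∫ h ≥ (∫ f)^λ (∫ g)^{1-λ}`. -/
theorem stmt16
    (n : ℕ) (f g h : (Fin n → ℝ) → ℝ)
    (hf : Measurable f) (hg : Measurable g) (hh : Measurable h)
    (hf0 : ∀ x, 0 ≤ f x) (hg0 : ∀ x, 0 ≤ g x) (hh0 : ∀ x, 0 ≤ h x)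
    (l : ℝ) (hl : l ∈ Set.Icc (0 : ℝ) 1)
    (hcond : ∀ x y, f x ^ l * g y ^ (1 - l) ≤ h (l • x + (1 - l) • y)) :
    (∫⁻ x, ENNReal.ofReal (f x)) ^ l * (∫⁻ x, ENNReal.ofReal (g x)) ^ (1 - l)
      ≤ ∫⁻ x, ENNReal.ofReal (h x) :=
  stmt16_general n f g h hf hg hh hf0 hg0 l hl hcond
end
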